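/- For every real r ≠ 0 and all real m, q, Λ, the two closed forms of the Karlhede invariant of the Reissner–Nordström–(anti-)de Sitter black hole agree: −(240/r¹²)·[Λm²r⁶ − (12/5)Λmq²r⁵ + ((76/45)Λq⁴ − 3m²)r⁴ + (6m³ + (36/5)mq²)r³ − ((87/5)m²q² + (76/15)q⁴)r² + (52/3)mq⁴r − (76/15)q⁶] = (720m²/r⁸ − 1728mq²/r⁹ + 1216q⁴/r¹⁰)·(1 + q²/r² − 2m/r − Λr²/3). Moreover, if r ≠ 0 and (1 − Λr²/3)r² − 2mr + q² = 0 (the horizon condition), then this invariant vanishes. -/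

import Mathlib

/-!
Both closed forms are `16 (45 m² r² − 108 m q² r + 76 q⁴) Δ(r) / r¹²`: the bracket of the
expanded form is a polynomial multiple of `Δ`. Hence the invariant vanishes wherever `Δ` does.
-/

/-- The expanded closed form of the Karlhede invariant
`∇_μ R_{αβγδ} ∇^μ R^{αβγδ}` of the Reissner–Nordström–(anti-)de Sitter black hole. -/
noncomputable def rnadsKarlhede (m q Λ r : ℝ) : ℝ :=
  -(240 / r ^ 12) *
    (Λ * m ^ 2 * r ^ 6 - 12 / 5 * Λ * m * q ^ 2 * r ^ 5
      + (76 / 45 * Λ * q ^ 4 - 3 * m ^ 2) * r ^ 4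
      + (6 * m ^ 3 + 36 / 5 * m * q ^ 2) * r ^ 3
      - (87 / 5 * m ^ 2 * q ^ 2 + 76 / 15 * q ^ 4) * r ^ 2
      + 52 / 3 * m * q ^ 4 * r - 76 / 15 * q ^ 6)

noncomputable def rnadsDelta (m q Λ r : ℝ) : ℝ :=
  (1 - Λ * r ^ 2 / 3) * r ^ 2 - 2 * m * r + q ^ 2

theorem rnadsKarlhede_eq_mul_rnadsDelta (m q Λ r : ℝ) :
    rnadsKarlhede m q Λ r =
      16 * (45 * m ^ 2 * r ^ 2 - 108 * m * q ^ 2 * r + 76 * q ^ 4) * rnadsDelta m q Λ r /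
        r ^ 12 := by
  unfold rnadsKarlhede rnadsDelta
  ring

theorem rnadsKarlhede_eq_zero_of_rnadsDelta_eq_zero {m q Λ r : ℝ} (h : rnadsDelta m q Λ r = 0) :
    rnadsKarlhede m q Λ r = 0 := by
  rw [rnadsKarlhede_eq_mul_rnadsDelta, h, mul_zero, zero_div]

theorem one_add_sq_div_sub_eq_rnadsDelta_div {r : ℝ} (hr : r ≠ 0) (m q Λ : ℝ) :
    1 + q ^ 2 / r ^ 2 - 2 * m / r - Λ * r ^ 2 / 3 = rnadsDelta m q Λ r / r ^ 2 := by
  unfold rnadsDelta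
  field_simp
  ring

/-- The two closed forms of the Karlhede invariant of the
Reissner–Nordström–(anti-)de Sitter black hole agree for `r ≠ 0`, and the invariant
vanishes at the horizon radii, i.e. whenever `(1 − Λr²/3)r² − 2mr + q² = 0`. -/
theorem rnadsKarlhede_factorized_and_horizon (r m q Λ : ℝ) (hr : r ≠ 0) :
    rnadsKarlhede m q Λ r =
      (720 * m ^ 2 / r ^ 8 - 1728 * m * q ^ 2 / r ^ 9 + 1216 * q ^ 4 / r ^ 10) *
        (1 + q ^ 2 / r ^ 2 - 2 * m / r - Λ * r ^ 2 / 3) ∧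
    ((1 - Λ * r ^ 2 / 3) * r ^ 2 - 2 * m * r + q ^ 2 = 0 → rnadsKarlhede m q Λ r = 0) := by
  refine ⟨?_, rnadsKarlhede_eq_zero_of_rnadsDelta_eq_zero⟩
  rw [rnadsKarlhede_eq_mul_rnadsDelta, one_add_sq_div_sub_eq_rnadsDelta_div hr]
  field_simp
  ring
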